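/- arXiv:1404.2394 — 2 statements merged into one kernel-verified Lean document; each statement's English description precedes it below -/
import Mathlib

section
/- For every 0 < s ≤ 1 and every m ∈ ℕ, D_pre(s,T^m) ≤ m · D_pre(s,T). -/
open Filter Set
open scoped ENNReal

variable {X : Type*}

/-- The Bowen metric `d_{T,n}(x,y) = max_{0 ≤ j < n} d(T^j x, T^j y)`. -/
noncomputable def bowenDist [PseudoMetricSpace X] (T : X → X) (n : ℕ) (x y : X) : ℝ :=
  ⨆ j : Fin n, dist (T^[(j : ℕ)] x) (T^[(j : ℕ)] y)

/-- `E` is an `(n,ε,K,T)`-separated set. -/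
def IsPreSeparated [PseudoMetricSpace X] (T : X → X) (n : ℕ) (ε : ℝ) (K : Set X)
    (E : Set X) : Prop :=
  E ⊆ K ∧ ∀ x ∈ E, ∀ y ∈ E, x ≠ y → ε < bowenDist T n x y

/-- `E` is an `(n,ε,K,T)`-spanning set. -/
def IsPreSpanning [PseudoMetricSpace X] (T : X → X) (n : ℕ) (ε : ℝ) (K : Set X)
    (E : Set X) : Prop :=
  E ⊆ K ∧ ∀ x ∈ K, ∃ y ∈ E, bowenDist T n x y ≤ ε

/-- `r(n,ε,K,T)`: maximal cardinality of an `(n,ε,K,T)`-separated set. -/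
noncomputable def sepMax [PseudoMetricSpace X] (T : X → X) (n : ℕ) (ε : ℝ) (K : Set X) : ℝ≥0∞ :=
  ⨆ (E : Finset X) (_ : IsPreSeparated T n ε K ↑E), (E.card : ℝ≥0∞)

/-- `s(n,ε,K,T)`: minimal cardinality of an `(n,ε,K,T)`-spanning set. -/
noncomputable def spanMin [PseudoMetricSpace X] (T : X → X) (n : ℕ) (ε : ℝ) (K : Set X) : ℝ≥0∞ :=
  ⨅ (E : Finset X) (_ : IsPreSpanning T n ε K ↑E), (E.card : ℝ≥0∞)

/-- The `s`-preimage entropy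
`D_pre(s,T) = lim_{ε→0} limsup_n (1/n^s) log sup_{x ∈ X, k ≥ n} r(n,ε,T^{-k}(x),T)`,
where the (monotone) limit as `ε → 0` is expressed as a supremum over `ε > 0`. -/
noncomputable def preEnt [PseudoMetricSpace X] (T : X → X) (s : ℝ) : EReal :=
  ⨆ (ε : ℝ) (_ : 0 < ε), Filter.atTop.limsup fun n : ℕ =>
    (((((n : ℝ) ^ s)⁻¹ : ℝ) : EReal)) *
      ENNReal.log (⨆ (x : X) (k : ℕ) (_ : n ≤ k), sepMax T n ε (T^[k] ⁻¹' {x}))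

/-- The preimage entropy `h_pre(T)`. -/
noncomputable def preimageEntropy [PseudoMetricSpace X] (T : X → X) : EReal := preEnt T 1

/-- The preimage entropy dimension `D_pre(T) = inf {s > 0 : D_pre(s,T) = 0}`. -/
noncomputable def preDim [PseudoMetricSpace X] (T : X → X) : ℝ≥0∞ :=
  ⨅ (s : ℝ) (_ : 0 < s ∧ preEnt T s = 0), ENNReal.ofReal s

/-!
Every `(n, ε)`-separated set for `T^m` is `(mn, ε)`-separated for `T`, since the Bowen metric of
`T^m` at time `n` only samples that of `T` at time `mn`; and a fibre of `(T^m)^k` with `k ≥ n` is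
a fibre of `T^{mk}` with `mk ≥ mn`. Hence the `n`-th term for `T^m` is bounded by the `mn`-th term
for `T` up to the normalisation: `1/n^s ≤ m/(mn)^s` exactly when `m^s ≤ m`, i.e. for `s ≤ 1`.
Passing to the subsequence `mn` can only lower the `limsup`.
-/

lemma mul_rpow_le_mul_rpow_of_one_le {a b s : ℝ} (ha : 1 ≤ a) (hb : 0 ≤ b) (hs : s ≤ 1) :
    (a * b) ^ s ≤ a * b ^ s := by
  rw [Real.mul_rpow (by linarith) hb]
  gcongr
  simpa using Real.rpow_le_rpow_of_exponent_le ha hs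

lemma limsup_comp_mul_le {β : Type*} [CompleteLattice β] (u : ℕ → β) {m : ℕ} (hm : 0 < m) :
    atTop.limsup (fun n => u (m * n)) ≤ atTop.limsup u :=
  Tendsto.limsup_comp_le_limsup (u := u) (v := (m * ·)) (tendsto_id.const_mul_atTop' hm)

section PreimageEntropy

variable [PseudoMetricSpace X] (T : X → X)

/-- `sup_{x ∈ X, k ≥ n} r(n, ε, T^{-k}(x), T)`. -/
noncomputable def preimageSepMax (n : ℕ) (ε : ℝ) : ℝ≥0∞ :=
  ⨆ (x : X) (k : ℕ) (_ : n ≤ k), sepMax T n ε (T^[k] ⁻¹' {x})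

noncomputable def preEntSeq (s ε : ℝ) (n : ℕ) : EReal :=
  ((((n : ℝ) ^ s)⁻¹ : ℝ) : EReal) * ENNReal.log (preimageSepMax T n ε)

lemma preEnt_eq_iSup_limsup_preEntSeq (s : ℝ) :
    preEnt T s = ⨆ (ε : ℝ) (_ : 0 < ε), atTop.limsup (preEntSeq T s ε) :=
  rfl

variable {T}

lemma bowenDist_iterate_le {m : ℕ} (hm : 0 < m) (n : ℕ) (x y : X) :
    bowenDist (T^[m]) n x y ≤ bowenDist T (m * n) x y := by
  rcases n.eq_zero_or_pos with rfl | hn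
  · simp [bowenDist]
  · have : Nonempty (Fin n) := ⟨⟨0, hn⟩⟩
    refine ciSup_le fun j => ?_
    rw [← Function.iterate_mul]
    exact le_ciSup (f := fun i : Fin (m * n) => dist (T^[i] x) (T^[i] y))
      (Set.finite_range _).bddAbove ⟨m * j, Nat.mul_lt_mul_of_pos_left j.2 hm⟩

lemma IsPreSeparated.of_iterate {m n : ℕ} (hm : 0 < m) {ε : ℝ} {K E : Set X}
    (hE : IsPreSeparated (T^[m]) n ε K E) : IsPreSeparated T (m * n) ε K E :=
  ⟨hE.1, fun x hx y hy hxy => (hE.2 x hx y hy hxy).trans_le (bowenDist_iterate_le hm n x y)⟩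

lemma IsPreSeparated.card_le_sepMax {n : ℕ} {ε : ℝ} {K : Set X} {E : Finset X}
    (hE : IsPreSeparated T n ε K E) : (E.card : ℝ≥0∞) ≤ sepMax T n ε K :=
  le_iSup₂ (f := fun (E : Finset X) (_ : IsPreSeparated T n ε K E) => (E.card : ℝ≥0∞)) E hE

lemma sepMax_iterate_le {m : ℕ} (hm : 0 < m) (n : ℕ) (ε : ℝ) (K : Set X) :
    sepMax (T^[m]) n ε K ≤ sepMax T (m * n) ε K :=
  iSup₂_le fun _ hE => (hE.of_iterate hm).card_le_sepMax

lemma preimageSepMax_iterate_le {m : ℕ} (hm : 0 < m) (n : ℕ) (ε : ℝ) :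
    preimageSepMax (T^[m]) n ε ≤ preimageSepMax T (m * n) ε := by
  refine iSup_le fun x => iSup₂_le fun k hk => ?_
  rw [← Function.iterate_mul]
  exact (sepMax_iterate_le hm n ε _).trans <|
    le_iSup_of_le x <| le_iSup₂_of_le (m * k) (Nat.mul_le_mul_left m hk) le_rfl

/-- A singleton is separated, and every point lies in the fibre `T^{-n}(T^n x)`. -/
lemma one_le_preimageSepMax [Nonempty X] (n : ℕ) (ε : ℝ) : 1 ≤ preimageSepMax T n ε := by
  obtain ⟨x⟩ := ‹Nonempty X›
  have hsep : IsPreSeparated T n ε (T^[n] ⁻¹' {T^[n] x}) ({x} : Finset X) :=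
    ⟨by simp, by simp⟩
  calc (1 : ℝ≥0∞) ≤ sepMax T n ε (T^[n] ⁻¹' {T^[n] x}) := by simpa using hsep.card_le_sepMax
    _ ≤ preimageSepMax T n ε := le_iSup_of_le (T^[n] x) <| le_iSup₂_of_le n le_rfl le_rfl

lemma preEnt_of_isEmpty [IsEmpty X] (s : ℝ) : preEnt T s = ⊥ := by
  refine (preEnt_eq_iSup_limsup_preEntSeq T s).trans <| iSup₂_eq_bot.2 fun ε _ => ?_
  have hbot : ∀ᶠ n in atTop, preEntSeq T s ε n = ⊥ := by
    filter_upwards [eventually_ge_atTop 1] with n hn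
    have hpos : (0 : ℝ) < ((n : ℝ) ^ s)⁻¹ := by positivity
    simp [preEntSeq, preimageSepMax, EReal.mul_bot_of_pos (EReal.coe_pos.2 hpos)]
  rw [limsup_congr hbot, limsup_const]

variable {s : ℝ} {m : ℕ}

lemma preEntSeq_iterate_le [Nonempty X] (hs : s ≤ 1) (hm : 0 < m) {n : ℕ} (hn : 0 < n)
    (ε : ℝ) : preEntSeq (T^[m]) s ε n ≤ ((m : ℝ) : EReal) * preEntSeq T s ε (m * n) := by
  have hn' : (0 : ℝ) < n := Nat.cast_pos.2 hn
  have hcoef : ((n : ℝ) ^ s)⁻¹ ≤ m * (((m * n : ℕ) : ℝ) ^ s)⁻¹ := by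
    rw [← div_eq_mul_inv, le_div_iff₀ (by positivity), Nat.cast_mul, ← div_eq_inv_mul,
      div_le_iff₀ (by positivity)]
    exact mul_rpow_le_mul_rpow_of_one_le (Nat.one_le_cast.2 hm) hn'.le hs
  have hlog_nonneg : 0 ≤ ENNReal.log (preimageSepMax T (m * n) ε) :=
    ENNReal.zero_le_log_iff.2 (one_le_preimageSepMax _ _)
  calc preEntSeq (T^[m]) s ε n
      ≤ ((((n : ℝ) ^ s)⁻¹ : ℝ) : EReal) * ENNReal.log (preimageSepMax T (m * n) ε) := by
        unfold preEntSeq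
        gcongr
        exact preimageSepMax_iterate_le hm n ε
    _ ≤ ((m * (((m * n : ℕ) : ℝ) ^ s)⁻¹ : ℝ) : EReal) *
          ENNReal.log (preimageSepMax T (m * n) ε) := by
        gcongr
    _ = ((m : ℝ) : EReal) * preEntSeq T s ε (m * n) := by
        rw [preEntSeq, EReal.coe_mul, mul_assoc]

lemma limsup_preEntSeq_iterate_le [Nonempty X] (hs : s ≤ 1) (hm : 0 < m) (ε : ℝ) :
    atTop.limsup (preEntSeq (T^[m]) s ε) ≤
      ((m : ℝ) : EReal) * atTop.limsup (preEntSeq T s ε) := by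
  calc atTop.limsup (preEntSeq (T^[m]) s ε)
      ≤ atTop.limsup fun n => ((m : ℝ) : EReal) * preEntSeq T s ε (m * n) := by
        refine limsup_le_limsup ?_
        filter_upwards [eventually_gt_atTop 0] with n hn
        exact preEntSeq_iterate_le hs hm hn ε
    _ = ((m : ℝ) : EReal) * atTop.limsup fun n => preEntSeq T s ε (m * n) :=
        EReal.limsup_const_mul_of_nonneg_of_ne_top (EReal.coe_nonneg.2 m.cast_nonneg)
          (EReal.coe_ne_top _)
    _ ≤ ((m : ℝ) : EReal) * atTop.limsup (preEntSeq T s ε) := by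
        gcongr
        exact limsup_comp_mul_le _ hm

end PreimageEntropy

theorem preEnt_iterate_le_mul_general {X : Type*} [MetricSpace X]
    {T : X → X} (s : ℝ) (hs1 : s ≤ 1)
    (m : ℕ) (hm : 0 < m) :
    preEnt (T^[m]) s ≤ ((m : ℝ) : EReal) * preEnt T s := by
  rcases isEmpty_or_nonempty X with hX | hX
  · simp [preEnt_of_isEmpty]
  · rw [preEnt_eq_iSup_limsup_preEntSeq, preEnt_eq_iSup_limsup_preEntSeq]
    refine iSup₂_le fun ε hε => (limsup_preEntSeq_iterate_le hs1 hm ε).trans ?_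
    gcongr
    exact le_iSup₂ (f := fun ε (_ : 0 < ε) => atTop.limsup (preEntSeq T s ε)) ε hε

theorem preEnt_iterate_le_mul {X : Type*} [MetricSpace X] [CompactSpace X]
    {T : X → X} (hT : Continuous T) (s : ℝ) (hs0 : 0 < s) (hs1 : s ≤ 1)
    (m : ℕ) (hm : 0 < m) :
    preEnt (T^[m]) s ≤ ((m : ℝ) : EReal) * preEnt T s :=
  preEnt_iterate_le_mul_general s hs1 m hm
end

section
/- For every m ∈ ℕ and every s > 0, the s-preimage entropy of the m-th iterate satisfies D_pre(s,T^m) ≥ m^s · D_pre(s,T). -/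
open Filter Set
open scoped ENNReal

variable {X : Type*}

/-- The `s`-preimage entropy defined via minimal spanning set cardinalities. -/
noncomputable def preEntSpan [PseudoMetricSpace X] (T : X → X) (s : ℝ) : EReal :=
  ⨆ (ε : ℝ) (_ : 0 < ε), Filter.atTop.limsup fun n : ℕ =>
    (((((n : ℝ) ^ s)⁻¹ : ℝ) : EReal)) *
      ENNReal.log (⨆ (x : X) (k : ℕ) (_ : n ≤ k), spanMin T n ε (T^[k] ⁻¹' {x}))

/-- Preimage entropy dimension via the spanning-set formulation. -/
noncomputable def preDimSpan [PseudoMetricSpace X] (T : X → X) : ℝ≥0∞ :=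
  ⨅ (s : ℝ) (_ : 0 < s ∧ preEntSpan T s = 0), ENNReal.ofReal s

/-!
Fix `ε > 0` and, by uniform continuity, `δ > 0` such that `δ`-close points stay `ε/2`-close
under `T^r` for all `r < m`; then the `(⌊n/m⌋ + 1, δ)`-Bowen ball of `T^m` lies in the
`(n, ε/2)`-Bowen ball of `T`. The fibre `T^{-k}(x)` is contained in the fibre `(T^m)^{-k'}(x')`
with `k' = ⌊k/m⌋ + 1` and `x' = T^{mk' - k} x`, and passing to a subset costs a factor `2` in the
radius. Hence `s(n, ε, T^{-k}x, T) ≤ s(⌊n/m⌋ + 1, δ, (T^m)^{-k'}x', T^m)`, and since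
`(⌊n/m⌋ + 1)^s ~ m^{-s} n^s` the normalised logarithms compare with the factor `m^{-s}`.
-/

open scoped Topology Uniformity

/-- `sup_{x ∈ X, k ≥ n} s(n, ε, T^{-k}(x), T)`, the quantity whose growth `preEntSpan` measures. -/
noncomputable def preimageSpanMin [PseudoMetricSpace X] (T : X → X) (n : ℕ) (ε : ℝ) : ℝ≥0∞ :=
  ⨆ (x : X) (k : ℕ) (_ : n ≤ k), spanMin T n ε (T^[k] ⁻¹' {x})

section BowenDist

variable [PseudoMetricSpace X] {T : X → X} {n : ℕ}

lemma dist_iterate_le_bowenDist {j : ℕ} (hj : j < n) (x y : X) :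
    dist (T^[j] x) (T^[j] y) ≤ bowenDist T n x y :=
  le_ciSup (f := fun j : Fin n => dist (T^[(j : ℕ)] x) (T^[(j : ℕ)] y))
    (Set.finite_range _).bddAbove ⟨j, hj⟩

lemma bowenDist_le {x y : X} {r : ℝ} (hr : 0 ≤ r) (h : ∀ j < n, dist (T^[j] x) (T^[j] y) ≤ r) :
    bowenDist T n x y ≤ r :=
  Real.iSup_le (fun j => h j j.2) hr

lemma bowenDist_nonneg (x y : X) : 0 ≤ bowenDist T n x y :=
  Real.iSup_nonneg fun _ => dist_nonneg

lemma bowenDist_comm (x y : X) : bowenDist T n x y = bowenDist T n y x := by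
  simp only [bowenDist, dist_comm]

lemma bowenDist_triangle (x y z : X) :
    bowenDist T n x z ≤ bowenDist T n x y + bowenDist T n y z :=
  bowenDist_le (add_nonneg (bowenDist_nonneg x y) (bowenDist_nonneg y z)) fun _ hj =>
    (dist_triangle _ _ _).trans
      (add_le_add (dist_iterate_le_bowenDist hj x y) (dist_iterate_le_bowenDist hj y z))

lemma bowenDist_mono {N : ℕ} (h : n ≤ N) (x y : X) : bowenDist T n x y ≤ bowenDist T N x y :=
  bowenDist_le (bowenDist_nonneg x y) fun _ hj => dist_iterate_le_bowenDist (hj.trans_le h) x y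

lemma bowenDist_le_of_bowenDist_iterate_le {m : ℕ} (hm : 0 < m) {δ η : ℝ} (hη : 0 ≤ η)
    (hδ : ∀ x y : X, dist x y ≤ δ → ∀ r < m, dist (T^[r] x) (T^[r] y) ≤ η)
    {x y : X} (h : bowenDist (T^[m]) n x y ≤ δ) : bowenDist T (m * n) x y ≤ η := by
  refine bowenDist_le hη fun j hj => ?_
  have hsplit (z : X) : T^[j] z = T^[j % m] ((T^[m])^[j / m] z) := by
    rw [← Function.iterate_mul, ← Function.iterate_add_apply, Nat.mod_add_div]
  rw [hsplit x, hsplit y]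
  exact hδ _ _ ((dist_iterate_le_bowenDist (Nat.div_lt_of_lt_mul hj) x y).trans h) _
    (Nat.mod_lt j hm)

end BowenDist

lemma preimage_iterate_subset_preimage_iterate_add (T : X → X) (j k : ℕ) (x : X) :
    T^[k] ⁻¹' {x} ⊆ T^[j + k] ⁻¹' {T^[j] x} := fun z (hz : T^[k] z = x) => by
  simp [Function.iterate_add_apply, hz]

section SpanMin

variable [PseudoMetricSpace X] {T : X → X} {n : ℕ}

lemma spanMin_le_of_bowenDist_le {S : X → X} {N : ℕ} {δ ε : ℝ} {K : Set X}
    (h : ∀ x y : X, bowenDist S n x y ≤ δ → bowenDist T N x y ≤ ε) :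
    spanMin T N ε K ≤ spanMin S n δ K :=
  le_iInf₂ fun E hE => iInf₂_le E ⟨hE.1, fun x hx =>
    let ⟨y, hy, hxy⟩ := hE.2 x hx
    ⟨y, hy, h x y hxy⟩⟩

/-- Spanning sets must lie inside the set they span, so each point of a spanning set of `K'` is
replaced by a point of `K` at distance at most `δ` from it. -/
lemma spanMin_le_of_subset {δ : ℝ} {K K' : Set X} (hK : K ⊆ K') :
    spanMin T n (2 * δ) K ≤ spanMin T n δ K' := by
  classical
  refine le_iInf₂ fun E hE => ?_
  let near (y : X) : Prop := ∃ z ∈ K, bowenDist T n z y ≤ δ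
  let g (y : X) : X := if h : near y then h.choose else y
  have hg {y : X} (h : near y) : g y ∈ K ∧ bowenDist T n (g y) y ≤ δ := by
    simpa only [g, dif_pos h] using h.choose_spec
  have hspan : IsPreSpanning T n (2 * δ) K ↑((E.filter near).image g) := by
    refine ⟨?_, fun x hx => ?_⟩
    · simp only [Finset.coe_image, Finset.coe_filter, Set.image_subset_iff]
      exact fun y hy => (hg hy.2).1
    · obtain ⟨y, hy, hxy⟩ := hE.2 x (hK hx)
      have hy' : near y := ⟨x, hx, hxy⟩
      refine ⟨g y, Finset.mem_image_of_mem g (Finset.mem_filter.2 ⟨hy, hy'⟩), ?_⟩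
      calc bowenDist T n x (g y) ≤ bowenDist T n x y + bowenDist T n y (g y) :=
            bowenDist_triangle x y (g y)
        _ ≤ δ + δ := add_le_add hxy (bowenDist_comm y (g y) ▸ (hg hy').2)
        _ = 2 * δ := (two_mul δ).symm
  calc spanMin T n (2 * δ) K ≤ ((E.filter near).image g).card :=
        iInf₂_le (f := fun (F : Finset X) _ => (F.card : ℝ≥0∞)) _ hspan
    _ ≤ E.card := by exact_mod_cast Finset.card_image_le.trans (Finset.card_filter_le E near)

lemma preimageSpanMin_le_preimageSpanMin_iterate {m : ℕ} (hm : 0 < m) {ε δ : ℝ} (hε : 0 ≤ ε)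
    (hδ : ∀ x y : X, dist x y ≤ δ → ∀ r < m, dist (T^[r] x) (T^[r] y) ≤ ε / 2) :
    preimageSpanMin T n ε ≤ preimageSpanMin (T^[m]) (n / m + 1) δ := by
  refine iSup₂_le fun x k => iSup_le fun hnk => ?_
  obtain ⟨j, hj⟩ := Nat.exists_eq_add_of_le' (Nat.lt_mul_div_succ k hm).le
  have hfibre : T^[k] ⁻¹' {x} ⊆ (T^[m])^[k / m + 1] ⁻¹' {T^[j] x} := by
    rw [← Function.iterate_mul, hj]
    exact preimage_iterate_subset_preimage_iterate_add T j k x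
  have hball (y z : X) (h : bowenDist (T^[m]) (n / m + 1) y z ≤ δ) : bowenDist T n y z ≤ ε / 2 :=
    (bowenDist_mono (Nat.lt_mul_div_succ n hm).le y z).trans
      (bowenDist_le_of_bowenDist_iterate_le hm (by positivity) hδ h)
  calc spanMin T n ε (T^[k] ⁻¹' {x})
      = spanMin T n (2 * (ε / 2)) (T^[k] ⁻¹' {x}) := by rw [mul_div_cancel₀ ε two_ne_zero]
    _ ≤ spanMin T n (ε / 2) ((T^[m])^[k / m + 1] ⁻¹' {T^[j] x}) := spanMin_le_of_subset hfibre
    _ ≤ spanMin (T^[m]) (n / m + 1) δ ((T^[m])^[k / m + 1] ⁻¹' {T^[j] x}) :=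
        spanMin_le_of_bowenDist_le hball
    _ ≤ preimageSpanMin (T^[m]) (n / m + 1) δ :=
        le_iSup_of_le (T^[j] x) <| le_iSup₂_of_le (k / m + 1)
          (Nat.succ_le_succ (Nat.div_le_div_right hnk)) le_rfl

end SpanMin

lemma exists_forall_dist_iterate_le [PseudoMetricSpace X] [CompactSpace X] {T : X → X}
    (hT : Continuous T) (m : ℕ) {η : ℝ} (hη : 0 < η) :
    ∃ δ > 0, ∀ x y : X, dist x y ≤ δ → ∀ r < m, dist (T^[r] x) (T^[r] y) ≤ η := by
  have h : ∀ᶠ p : X × X in 𝓤 X, ∀ r ∈ Set.Iio m, dist (T^[r] p.1) (T^[r] p.2) ≤ η :=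
    (Filter.eventually_all_finite (Set.finite_Iio m)).2 fun r _ =>
      CompactSpace.uniformContinuous_of_continuous (hT.iterate r)
        (Metric.uniformity_basis_dist_le.mem_of_mem hη)
  obtain ⟨δ, hδ, hball⟩ := Metric.uniformity_basis_dist_le.eventually_iff.1 h
  exact ⟨δ, hδ, fun x y hxy => hball (x := (x, y)) hxy⟩

lemma EReal.limsup_coe_mul_le_of_tendsto {α : Type*} {l : Filter α} {u : α → ℝ} {c : ℝ}
    (hu : Tendsto u l (𝓝 c)) (hc : 0 < c) (v : α → EReal) :
    limsup (fun a => (u a : EReal) * v a) l ≤ c * limsup v l := by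
  refine EReal.le_of_forall_lt_iff_le.1 fun z hz => ?_
  have hv : limsup v l < (z / c : ℝ) := by
    rwa [EReal.coe_div, EReal.lt_div_iff (by exact_mod_cast hc) (EReal.coe_ne_top c),
      EReal.mul_comm]
  obtain ⟨y, hvy, hyz⟩ := EReal.exists_between_coe_real hv
  have hcy : c * y < z := by
    rw [EReal.coe_lt_coe_iff, lt_div_iff₀ hc] at hyz
    linarith
  refine limsup_le_of_le (by isBoundedDefault) ?_
  filter_upwards [eventually_lt_of_limsup_lt hvy, hu.eventually (lt_mem_nhds hc),
    (hu.mul_const y).eventually (gt_mem_nhds hcy)] with a hva hua huy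
  calc (u a : EReal) * v a ≤ u a * y :=
        mul_le_mul_of_nonneg_left hva.le (EReal.coe_nonneg.2 hua.le)
    _ ≤ z := by exact_mod_cast huy.le

lemma tendsto_natCast_div_add_one_div_natCast {m : ℕ} (hm : 0 < m) :
    Tendsto (fun n : ℕ => ((n / m + 1 : ℕ) : ℝ) / n) atTop (𝓝 (m : ℝ)⁻¹) := by
  have hm' : (0 : ℝ) < m := Nat.cast_pos.2 hm
  have hx : Tendsto (fun n : ℕ => (n : ℝ) / m) atTop atTop :=
    tendsto_natCast_atTop_atTop.atTop_div_const hm'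
  have h := ((tendsto_nat_floor_div_atTop.add tendsto_inv_atTop_zero).comp hx).mul_const
    (m : ℝ)⁻¹
  rw [add_zero, one_mul] at h
  refine h.congr' ((eventually_ge_atTop 1).mono fun n hn => ?_)
  have hn' : (0 : ℝ) < n := Nat.cast_pos.2 hn
  simp only [Function.comp_apply, Nat.floor_div_eq_div, Nat.cast_add, Nat.cast_one]
  field_simp

lemma limsup_rpow_inv_mul_le {m : ℕ} (hm : 0 < m) (s : ℝ) {f g : ℕ → EReal}
    (hfg : ∀ n, f n ≤ g (n / m + 1)) :
    (((m : ℝ) ^ s : ℝ) : EReal) * limsup (fun n : ℕ => (((n : ℝ) ^ s)⁻¹ : ℝ) * f n) atTop ≤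
      limsup (fun n : ℕ => (((n : ℝ) ^ s)⁻¹ : ℝ) * g n) atTop := by
  set b : ℕ → EReal := fun n => (((n : ℝ) ^ s)⁻¹ : ℝ) * g n
  set c : ℕ → ℝ := fun n => (((n / m + 1 : ℕ) : ℝ) / n) ^ s
  have hM : 0 < (m : ℝ) ^ s := by positivity
  have hc : Tendsto c atTop (𝓝 ((m : ℝ) ^ s)⁻¹) := by
    rw [← Real.inv_rpow (Nat.cast_nonneg m)]
    exact (tendsto_natCast_div_add_one_div_natCast hm).rpow_const
      (Or.inl (inv_ne_zero (Nat.cast_ne_zero.2 hm.ne')))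
  have hfb : ∀ᶠ n : ℕ in atTop, (((n : ℝ) ^ s)⁻¹ : ℝ) * f n ≤ c n * b (n / m + 1) := by
    filter_upwards [eventually_ge_atTop 1] with n hn
    have hn' : (0 : ℝ) < n := Nat.cast_pos.2 hn
    have hrescale : ((n : ℝ) ^ s)⁻¹ = c n * (((n / m + 1 : ℕ) : ℝ) ^ s)⁻¹ := by
      have : (0 : ℝ) < ((n / m + 1 : ℕ) : ℝ) ^ s := by positivity
      rw [show c n = _ from Real.div_rpow (Nat.cast_nonneg _) hn'.le s]
      field_simp
    calc (((n : ℝ) ^ s)⁻¹ : ℝ) * f n ≤ (((n : ℝ) ^ s)⁻¹ : ℝ) * g (n / m + 1) :=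
          mul_le_mul_of_nonneg_left (hfg n) (EReal.coe_nonneg.2 (by positivity))
      _ = c n * b (n / m + 1) := by rw [hrescale, EReal.coe_mul, mul_assoc]
  have hφ : Tendsto (fun n : ℕ => n / m + 1) atTop atTop :=
    tendsto_atTop_mono (fun n => Nat.le_succ _) (Nat.tendsto_div_const_atTop hm.ne')
  calc (((m : ℝ) ^ s : ℝ) : EReal) * limsup (fun n : ℕ => (((n : ℝ) ^ s)⁻¹ : ℝ) * f n) atTop
      ≤ (((m : ℝ) ^ s : ℝ) : EReal) * limsup (fun n => c n * b (n / m + 1)) atTop :=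
        mul_le_mul_of_nonneg_left (limsup_le_limsup hfb) (EReal.coe_nonneg.2 hM.le)
    _ ≤ (((m : ℝ) ^ s : ℝ) : EReal) * ((((m : ℝ) ^ s)⁻¹ : ℝ) * limsup (b ∘ (· / m + 1)) atTop) :=
        mul_le_mul_of_nonneg_left
          (EReal.limsup_coe_mul_le_of_tendsto hc (inv_pos.2 hM) _) (EReal.coe_nonneg.2 hM.le)
    _ ≤ (((m : ℝ) ^ s : ℝ) : EReal) * ((((m : ℝ) ^ s)⁻¹ : ℝ) * limsup b atTop) := by
        gcongr
        exact hφ.limsup_comp_le_limsup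
    _ = limsup b atTop := by
        rw [← mul_assoc, ← EReal.coe_mul, mul_inv_cancel₀ hM.ne', EReal.coe_one, one_mul]

lemma EReal.coe_mul_le_iff_le_div {r : ℝ} (hr : 0 < r) {x y : EReal} :
    (r : EReal) * x ≤ y ↔ x ≤ y / r := by
  rw [EReal.le_div_iff_mul_le (by exact_mod_cast hr) (EReal.coe_ne_top r), EReal.mul_comm]

theorem preEntSpan_iterate_ge_general {X : Type*} [MetricSpace X] [CompactSpace X]
    {T : X → X} (hT : Continuous T) (m : ℕ) (hm : 0 < m) (s : ℝ) :
    ((((m : ℝ) ^ s : ℝ)) : EReal) * preEntSpan T s ≤ preEntSpan (T^[m]) s := by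
  have hM : 0 < (m : ℝ) ^ s := by positivity
  unfold preEntSpan
  rw [EReal.coe_mul_le_iff_le_div hM]
  refine iSup₂_le fun ε hε => ?_
  rw [← EReal.coe_mul_le_iff_le_div hM]
  obtain ⟨δ, hδ, hTδ⟩ := exists_forall_dist_iterate_le hT m (half_pos hε)
  have hspan (n : ℕ) := preimageSpanMin_le_preimageSpanMin_iterate (n := n) hm hε.le hTδ
  exact (limsup_rpow_inv_mul_le hm s fun n => ENNReal.log_monotone (hspan n)).trans
    (le_iSup₂_of_le δ hδ le_rfl)

theorem preEntSpan_iterate_ge {X : Type*} [MetricSpace X] [CompactSpace X]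
    {T : X → X} (hT : Continuous T) (m : ℕ) (hm : 0 < m) (s : ℝ) (hs : 0 < s) :
    ((((m : ℝ) ^ s : ℝ)) : EReal) * preEntSpan T s ≤ preEntSpan (T^[m]) s :=
  preEntSpan_iterate_ge_general hT m hm s
end
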